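/- Correctness of IVM (immutable ASTs): Let N and N' be AST roots in each of which every node occurs at most once, let q be a pattern query, and let V_q be a view that is correct for N. Then the generalized multiset IVM(q, V_q, D(N') ⊖ D(N)) is correct for N'. -/

import Mathlib

open Classical
noncomputable section

/-! ### Abstract syntax trees -/

/-- An AST node: a label, an attribute map, and a list of children.  The type
`Attr` stands for the finite partial attribute maps `Σ_M ⇀ 𝔻`. -/
inductive ASTNode (L : Type) (Attr : Type) : Type where
  | mk : L → Attr → List (ASTNode L Attr) → ASTNode L Attr

namespace ASTNode

variable {L Attr : Type}

def label : ASTNode L Attr → L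
  | .mk ℓ _ _ => ℓ

def attrs : ASTNode L Attr → Attr
  | .mk _ A _ => A

def children : ASTNode L Attr → List (ASTNode L Attr)
  | .mk _ _ ns => ns

end ASTNode

/-! ### Scopes -/

/-- A scope: a partial map from node variables to attribute maps. -/
def Scope (I : Type) (Attr : Type) := I → Option Attr

def emptyScope {I Attr : Type} : Scope I Attr := fun _ => none

/-- Left-biased union of scopes. -/
def Scope.union {I Attr : Type} (Γ₁ Γ₂ : Scope I Attr) : Scope I Attr :=
  fun i => (Γ₁ i).orElse (fun _ => Γ₂ i)

/-- `{i ↦ A} ∪ Γ`. -/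
def Scope.insert {I Attr : Type} (i : I) (A : Attr) (Γ : Scope I Attr) : Scope I Attr :=
  fun j => if j = i then some A else Γ j

/-! ### Pattern queries -/

/-- Pattern queries: `AnyNode`, or `Match(ℓ, i, [q₁,…,qₙ], θ)` with `θ` a Boolean
predicate on scopes. -/
inductive Pattern (L : Type) (Attr : Type) (I : Type) : Type where
  | any : Pattern L Attr I
  | node : L → I → List (Pattern L Attr I) → (Scope I Attr → Bool) → Pattern L Attr I

variable {L Attr I : Type}

mutual
/-- Pattern evaluation `⟦q(N)⟧`, returning a Boolean and a scope. -/
def evalPattern : Pattern L Attr I → ASTNode L Attr → Bool × Scope I Attr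
  | .any, _ => (true, emptyScope)
  | .node ℓq i qs θ, .mk ℓ A ns =>
      match evalChildren qs ns with
      | none => (false, emptyScope)
      | some Γc =>
          let Γ : Scope I Attr := Scope.insert i A Γc
          if ℓq = ℓ ∧ θ Γ = true then (true, Γ) else (false, emptyScope)

/-- Evaluate the children: succeeds (returning the union of the child scopes)
iff the lists have equal length and every child pattern matches. -/
def evalChildren : List (Pattern L Attr I) → List (ASTNode L Attr) → Option (Scope I Attr)
  | [], [] => some emptyScope
  | q :: qs, n :: ns =>
      match evalPattern q n, evalChildren qs ns with
      | (true, Γ₁), some Γ₂ => some (Γ₁.union Γ₂)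
      | _, _ => none
  | _, _ => none
end

mutual
/-- The descendants `D(N)` of a node (as a list). -/
def ASTNode.descendants : ASTNode L Attr → List (ASTNode L Attr)
  | .mk ℓ A ns => .mk ℓ A ns :: descendantsList ns

def descendantsList : List (ASTNode L Attr) → List (ASTNode L Attr)
  | [] => []
  | n :: ns => n.descendants ++ descendantsList ns
end

/-- The match set `q(N)`: descendants of `N` on which `q` evaluates to true. -/
def matchSet (q : Pattern L Attr I) (N : ASTNode L Attr) : Set (ASTNode L Attr) :=
  {N' | N' ∈ N.descendants ∧ ∃ Γ, evalPattern q N' = (true, Γ)}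

/-! ### Generalized multisets -/

/-- Lift a list (in particular, a set given as a duplicate-free list) to the
generalized multiset counting occurrences. -/
def listGM (l : List (ASTNode L Attr)) : ASTNode L Attr →₀ ℤ :=
  (l.map (fun x => Finsupp.single x (1 : ℤ))).sum

/-- A view `V_q` is correct for `N` if it maps elements of `q(N)` to `1` and all
other nodes to `0`. -/
def CorrectView (q : Pattern L Attr I) (N : ASTNode L Attr) (V : ASTNode L Attr →₀ ℤ) : Prop :=
  ∀ x, V x = if x ∈ matchSet q N then 1 else 0

/-- `IVM(q, V, Δ)`: add `Δ(x)` to `V(x)` at every `x` on which `q` evaluates to true. -/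
def IVM (q : Pattern L Attr I) (V Δ : ASTNode L Attr →₀ ℤ) : ASTNode L Attr →₀ ℤ :=
  V + Δ.filter (fun x => (evalPattern q x).1 = true)

/-! ### Replacement, depth, ancestors -/

mutual
/-- The replacement `N[R\R']`. -/
def ASTNode.repl (R R' : ASTNode L Attr) : ASTNode L Attr → ASTNode L Attr
  | .mk ℓ A ns =>
      if ASTNode.mk ℓ A ns = R then R' else .mk ℓ A (replList R R' ns)

def replList (R R' : ASTNode L Attr) : List (ASTNode L Attr) → List (ASTNode L Attr)
  | [] => []
  | n :: ns => ASTNode.repl R R' n :: replList R R' ns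
end

mutual
/-- The depth `dep(q)` of a pattern. -/
def Pattern.depth : Pattern L Attr I → ℕ
  | .any => 0
  | .node _ _ qs _ => 1 + depthList qs

def depthList : List (Pattern L Attr I) → ℕ
  | [] => 0
  | q :: qs => max q.depth (depthList qs)
end

/-- `descAt d N M`: `M` is a descendant of `N` at distance exactly `d`. -/
def descAt : ℕ → ASTNode L Attr → ASTNode L Attr → Prop
  | 0, N, M => N = M
  | d + 1, N, M => ∃ c ∈ N.children, descAt d c M

/-- The generalized multiset `{| Aⁱ(R) ↦ 1 : 1 ≤ i ≤ d, Aⁱ(R) exists relative to N |}`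
of ancestors of `R` (in `N`) at distances `1,…,d`. -/
def ancestorsGM (N R : ASTNode L Attr) (d : ℕ) : ASTNode L Attr →₀ ℤ :=
  ∑ i ∈ Finset.Icc 1 d, listGM (N.descendants.filter (fun A => decide (descAt i A R)))

/-- The maximal search set `⌈R, R'⌉_q` (ancestors of `R` are taken in `N`,
ancestors of `R'` in `N[R\R']`). -/
def maxSearchSet (q : Pattern L Attr I) (N R R' : ASTNode L Attr) : ASTNode L Attr →₀ ℤ :=
  listGM R.descendants + ancestorsGM N R q.depth
    - listGM R'.descendants - ancestorsGM (N.repl R R') R' q.depth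

/-! ### Node generators -/

/-- Node generators: `Reuse(i)` or `Gen(ℓ, ā, [g₁,…,gₙ])`, where the attribute
expressions `ā` are collectively a function from scopes to attribute maps. -/
inductive NodeGen (L : Type) (Attr : Type) (I : Type) : Type where
  | reuse : I → NodeGen L Attr I
  | gen : L → (Scope I Attr → Attr) → List (NodeGen L Attr I) → NodeGen L Attr I

mutual
/-- Generator evaluation `⟦g⟧_{Γ,μ}`. -/
def evalGen (Γ : Scope I Attr) (μ : I → ASTNode L Attr) : NodeGen L Attr I → ASTNode L Attr
  | .reuse i => μ i
  | .gen ℓ a gs => .mk ℓ (a Γ) (evalGenList Γ μ gs)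

def evalGenList (Γ : Scope I Attr) (μ : I → ASTNode L Attr) :
    List (NodeGen L Attr I) → List (ASTNode L Attr)
  | [] => []
  | g :: gs => evalGen Γ μ g :: evalGenList Γ μ gs
end

mutual
/-- The matched node pairs `MP(q, R)`. -/
def MP : Pattern L Attr I → ASTNode L Attr → List (Pattern L Attr I × ASTNode L Attr)
  | .any, R => [(.any, R)]
  | .node ℓ i qs θ, .mk ℓ' A ns => (.node ℓ i qs θ, .mk ℓ' A ns) :: MPList qs ns

def MPList : List (Pattern L Attr I) → List (ASTNode L Attr) →
    List (Pattern L Attr I × ASTNode L Attr)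
  | q :: qs, n :: ns => MP q n ++ MPList qs ns
  | _, _ => []
end

mutual
/-- The generated node pairs `GP(g, Γ, μ)`. -/
def GP (Γ : Scope I Attr) (μ : I → ASTNode L Attr) :
    NodeGen L Attr I → List (NodeGen L Attr I × ASTNode L Attr)
  | .reuse i => [(.reuse i, μ i)]
  | .gen ℓ a gs => (.gen ℓ a gs, evalGen Γ μ (.gen ℓ a gs)) :: GPList Γ μ gs

def GPList (Γ : Scope I Attr) (μ : I → ASTNode L Attr) :
    List (NodeGen L Attr I) → List (NodeGen L Attr I × ASTNode L Attr)
  | [] => []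
  | g :: gs => GP Γ μ g ++ GPList Γ μ gs
end

/-- A generator `g` is safe for `(q, R)` with scopes `Γ, μ`: it reuses exactly
the wildcard-matched subtrees of `R`. -/
def SafeGen (q : Pattern L Attr I) (R : ASTNode L Attr) (g : NodeGen L Attr I)
    (Γ : Scope I Attr) (μ : I → ASTNode L Attr) : Prop :=
  ∀ N : ASTNode L Attr,
    (Pattern.any, N) ∈ MP q R ↔ ∃ i, μ i = N ∧ (NodeGen.reuse i, N) ∈ GP Γ μ g

mutual
/-- `|g|`: the number of `Gen` and `Reuse` terms in `g`. -/
def NodeGen.size : NodeGen L Attr I → ℕ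
  | .reuse _ => 1
  | .gen _ _ gs => 1 + sizeGenList gs

def sizeGenList : List (NodeGen L Attr I) → ℕ
  | [] => 0
  | g :: gs => g.size + sizeGenList gs
end

mutual
/-- `|q|`: the number of `Match` and `AnyNode` terms in `q`. -/
def Pattern.size : Pattern L Attr I → ℕ
  | .any => 1
  | .node _ _ qs _ => 1 + sizePatList qs

def sizePatList : List (Pattern L Attr I) → ℕ
  | [] => 0
  | q :: qs => q.size + sizePatList qs
end

/-! ### Paths, occurrences, alignment -/

/-- The node reached from `N` by following the child-index path `π`. -/
def nodeAt (N : ASTNode L Attr) (π : List ℕ) : Option (ASTNode L Attr) :=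
  match π with
  | [] => some N
  | k :: π' => (N.children[k]?).bind fun c => nodeAt c π'

/-- The subpattern occurrence of `q` located at the child-index path `π`. -/
def subAt (q : Pattern L Attr I) (π : List ℕ) : Option (Pattern L Attr I) :=
  match π, q with
  | [], q => some q
  | _ :: _, .any => none
  | k :: π', .node _ _ qs _ => (qs[k]?).bind fun qk => subAt qk π'

/-- `π` is an occurrence of a `Match` subpattern with node variable `i`. -/
def IsMatchVarOcc (q : Pattern L Attr I) (π : List ℕ) (i : I) : Prop :=
  ∃ ℓ qs θ, subAt q π = some (.node ℓ i qs θ)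

/-- `π` is an occurrence of a `Match` subpattern of `q`. -/
def IsMatchOcc (q : Pattern L Attr I) (π : List ℕ) : Prop :=
  ∃ i, IsMatchVarOcc q π i

/-- The node variables of the `Match` subpatterns of `q`. -/
def patVars (q : Pattern L Attr I) : Set I :=
  {i | ∃ π, IsMatchVarOcc q π i}

/-- The scope `Γ_σ` induced by an assignment `σ` of nodes to (paths of)
`Match`-subpattern occurrences of `q`: it maps the node variable of each
`Match` subpattern to the attribute map of the assigned node. -/
def scopeOf (q : Pattern L Attr I) (σ : List ℕ → ASTNode L Attr) : Scope I Attr :=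
  fun i => if h : ∃ π, IsMatchVarOcc q π i then some (σ h.choose).attrs else none

mutual
/-- Structural alignment at depth 0. -/
def align0 : Pattern L Attr I → NodeGen L Attr I → Bool
  | .any, _ => true
  | _, .reuse _ => true
  | .node ℓ _ qs _, .gen ℓ' _ gs =>
      if ℓ = ℓ' ∧ qs.length = gs.length then align0List qs gs else false

def align0List : List (Pattern L Attr I) → List (NodeGen L Attr I) → Bool
  | [], [] => true
  | q :: qs, g :: gs => align0 q g && align0List qs gs
  | _, _ => false
end

/-- Structural alignment at depth `d`. -/
def alignD : ℕ → Pattern L Attr I → NodeGen L Attr I → Bool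
  | 0, q, g => align0 q g
  | _ + 1, .any, _ => false
  | d + 1, .node _ _ qs _, g => qs.attach.any (fun qk => alignD d qk.1 g)

end

section

variable {L Attr I : Type}

theorem listGM_apply (l : List (ASTNode L Attr)) (x : ASTNode L Attr) :
    listGM l x = l.count x := by
  induction l with
  | nil => simp [listGM]
  | cons a l ih =>
    simp only [listGM, List.map_cons, List.sum_cons, Finsupp.add_apply] at ih ⊢
    rw [ih, List.count_cons, Finsupp.single_apply]
    split_ifs <;> simp_all [add_comm]

theorem listGM_apply_of_nodup {l : List (ASTNode L Attr)} (hl : l.Nodup) (x : ASTNode L Attr) :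
    listGM l x = if x ∈ l then 1 else 0 := by
  rw [listGM_apply]
  split_ifs with hx
  · rw [List.count_eq_one_of_mem hl hx, Nat.cast_one]
  · rw [List.count_eq_zero_of_not_mem hx, Nat.cast_zero]

theorem mem_matchSet_iff {q : Pattern L Attr I} {N x : ASTNode L Attr} :
    x ∈ matchSet q N ↔ x ∈ N.descendants ∧ (evalPattern q x).1 = true :=
  and_congr_right fun _ => ⟨fun ⟨_, h⟩ => by rw [h], fun h => ⟨_, Prod.ext h rfl⟩⟩

end

/-- **Correctness of IVM, immutable ASTs.** Let `N` and `N'` be AST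
roots in each of which every node occurs at most once, let `q` be a pattern
query, and let `V` be a view correct for `N`.  Then
`IVM(q, V, D(N') ⊖ D(N))` is correct for `N'`. -/
theorem ivm_correct {L Attr I : Type}
    (q : Pattern L Attr I) (N N' : ASTNode L Attr)
    (hN : N.descendants.Nodup) (hN' : N'.descendants.Nodup)
    (V : ASTNode L Attr →₀ ℤ) (hV : CorrectView q N V) :
    CorrectView q N' (IVM q V (listGM N'.descendants - listGM N.descendants)) := by
  intro x
  by_cases hq : (evalPattern q x).1 = true
  · rw [IVM, Finsupp.add_apply, Finsupp.filter_apply_pos (fun y => (evalPattern q y).1 = true) _ hq,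
      hV x, Finsupp.sub_apply, listGM_apply_of_nodup hN, listGM_apply_of_nodup hN']
    simp only [mem_matchSet_iff, hq, and_true]
    exact add_sub_cancel _ _
  · rw [IVM, Finsupp.add_apply, Finsupp.filter_apply_neg (fun y => (evalPattern q y).1 = true) _ hq,
      hV x, add_zero]
    simp [mem_matchSet_iff, hq]
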